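/- arXiv:math/0103112 — 2 statements merged into one kernel-verified Lean document; each statement's English description precedes it below -/
import Mathlib

section
/- A finite semigroup S of transformations of a finite set Q that has no proper two-sided ideal consists of elements all having the same rank. -/
/-- A transformation semigroup on a finite set with no proper two-sided ideal
has all its elements of the same rank. -/
theorem stmt4 {Q : Type*} [Finite Q] (S : Set (Q → Q))
    (hS : ∀ x ∈ S, ∀ y ∈ S, (fun q => y (x q)) ∈ S)
    (hsimple : ¬ ∃ Z : Set (Q → Q), Z.Nonempty ∧ Z ⊂ S ∧
      (∀ s ∈ S, ∀ z ∈ Z, (fun q => z (s q)) ∈ Z ∧ (fun q => s (z q)) ∈ Z)) :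
    ∀ x ∈ S, ∀ y ∈ S, (Set.range x).ncard = (Set.range y).ncard := by
  intro x hx y hy
  -- minimum rank element
  obtain ⟨w, hw, hwmin⟩ := Set.exists_min_image S (fun z => (Set.range z).ncard)
    S.toFinite ⟨x, hx⟩
  set m := (Set.range w).ncard with hm
  -- Z : elements of minimal rank
  set Z : Set (Q → Q) := {z ∈ S | (Set.range z).ncard = m} with hZdef
  have hZsub : Z ⊆ S := fun z hz => hz.1
  have key : ∀ s ∈ S, ∀ z ∈ Z, (fun q => z (s q)) ∈ Z ∧ (fun q => s (z q)) ∈ Z := by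
    intro s hs z hz
    constructor
    · refine ⟨hS s hs z hz.1, le_antisymm ?_ ?_⟩
      · calc (Set.range fun q => z (s q)).ncard ≤ (Set.range z).ncard := by
              apply Set.ncard_le_ncard _ (Set.toFinite _)
              rintro _ ⟨q, rfl⟩; exact ⟨s q, rfl⟩
          _ = m := hz.2
      · exact hwmin _ (hS s hs z hz.1)
    · refine ⟨hS z hz.1 s hs, le_antisymm ?_ ?_⟩
      · calc (Set.range fun q => s (z q)).ncard = (s '' Set.range z).ncard := by
              rw [← Set.range_comp]; rfl
          _ ≤ (Set.range z).ncard := Set.ncard_image_le (Set.toFinite _)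
          _ = m := hz.2
      · exact hwmin _ (hS z hz.1 s hs)
  have hZeq : Z = S := by
    by_contra hne
    exact hsimple ⟨Z, ⟨w, hw, rfl⟩, ⟨hZsub, fun h => hne (le_antisymm hZsub h)⟩, key⟩
  have hxZ : x ∈ Z := hZeq ▸ hx
  have hyZ : y ∈ Z := hZeq ▸ hy
  rw [hxZ.2, hyZ.2]
end

section
/- A semigroup S satisfying aba = a for all a, b ∈ S is isomorphic to a direct product L × R where L is a left-zero semigroup (xy = x for all x, y) and R is a right-zero semigroup (xy = y for all x, y). -/
/-- A rectangular band (`aba = a` for all `a, b`) is isomorphic to a direct product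
of a left-zero semigroup `L` (`xy = x`) and a right-zero semigroup `R` (`xy = y`). -/
theorem stmt18 {S : Type u} [Semigroup S] (h : ∀ a b : S, a * b * a = a) :
    ∃ (L R : Type u) (mulL : L → L → L) (mulR : R → R → R),
      (∀ x y : L, mulL x y = x) ∧ (∀ x y : R, mulR x y = y) ∧
      ∃ φ : S ≃ L × R, ∀ x y : S,
        φ (x * y) = (mulL (φ x).1 (φ y).1, mulR (φ x).2 (φ y).2) := by
  have idem : ∀ a : S, a * a = a := by
    intro a
    have this1 := h (a * a) a
    rw [h a a, ← mul_assoc, h a a] at this1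
    exact this1.symm
  have key : ∀ a b c : S, a * b * c = a * c := by
    intro a b c
    have huv : (a * c) * (a * b * c) = a * b * c := by
      have : (a * c) * (a * b * c) = ((a * c * a) * b) * c := by
        simp [mul_assoc]
      rw [this, h a c]
    have hvu : (a * b * c) * (a * c) = a * b * c := by
      have e1 : (a * b * c) * (a * c) = (a * b) * (c * a * c) := by
        simp [mul_assoc]
      rw [e1, h c a]
    have h2 := h (a * c) (a * b * c)
    rw [huv, hvu] at h2
    exact h2
  rcases isEmpty_or_nonempty S with he | hne
  · exact ⟨S, S, fun x _ => x, fun _ y => y, fun _ _ => rfl, fun _ _ => rfl,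
      Equiv.equivOfIsEmpty S (S × S), fun x => isEmptyElim x⟩
  · obtain ⟨e⟩ := hne
    refine ⟨{x : S // x * e = x}, {x : S // e * x = x},
      fun x _ => x, fun _ y => y, fun _ _ => rfl, fun _ _ => rfl,
      ⟨⟨fun x => (⟨x * e, by rw [mul_assoc, idem e]⟩, ⟨e * x, by rw [← mul_assoc, idem e]⟩),
        fun p => p.1.1 * p.2.1, ?_, ?_⟩, ?_⟩⟩
    · intro x
      simp only []
      have e2 : (x * e) * (e * x) = ((x * e) * e) * x := (mul_assoc (x * e) e x).symm
      rw [e2, mul_assoc x e e, idem e]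
      exact h x e
    · rintro ⟨⟨l, hl⟩, ⟨r, hr⟩⟩
      simp only [Prod.mk.injEq, Subtype.mk.injEq]
      constructor
      · rw [key l r e]; exact hl
      · rw [← mul_assoc, key e l r]; exact hr
    · intro x y
      simp only [Equiv.coe_fn_mk, Prod.mk.injEq, Subtype.mk.injEq]
      constructor
      · exact key x y e
      · rw [← mul_assoc, key e x y]
end
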